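/- arXiv:1411.7164 — 6 statements merged into one kernel-verified Lean document; each statement's English description precedes it below -/
import Mathlib

section
/- Let λ be an ordinal and ⟨w_i : i < γ⟩ a (well-ordered) sequence of countable subsets of λ such that every countably infinite subset of λ is contained in some w_i. For a countably infinite v ⊆ λ let i(v) be the least i with v \ w_i finite, and for u ⊆ λ define cl(u) = u ∪ {0} ∪ ⋃{ w_{i(v)} : v a countably infinite subset of u }. Then there is no sequence ⟨u_n : n < ω⟩ of subsets of λ such that for every n, u_{n+1} ⊆ u_n and u_n is not a subset of cl(u_{n+1}). -/
/-!
Pick `x n ∈ u n \ cl (u (n + 1))`. Since `u (n + 1) ⊆ cl (u (n + 1))`, the `x n` are pairwise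
distinct, so every tail `{x k : k ≥ n}` is a countably infinite subset of `u n`. Its index is
antitone in `n`, hence attains its minimum at some `N` and stays there from `N` on. Cofinitely
many `x k` lie in `w (idx (tail N))`; for such a `k ≥ N` this set is `w (idx (tail (k + 1)))`,
which is part of `cl (u (k + 1))`, contradicting the choice of `x k`.
-/

universe u

/-- `idx γ w v` : the least `i < γ` such that `v \ w i` is finite. -/
noncomputable def idx (γ : Ordinal.{u}) (w : Ordinal.{u} → Set Ordinal.{u})
    (v : Set Ordinal.{u}) : Ordinal.{u} :=
  sInf {i | i < γ ∧ (v \ w i).Finite}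

/-- `cl γ w u = u ∪ {0} ∪ ⋃ { w (idx v) : v a countably infinite subset of u }`. -/
noncomputable def cl (γ : Ordinal.{u}) (w : Ordinal.{u} → Set Ordinal.{u})
    (u : Set Ordinal.{u}) : Set Ordinal.{u} :=
  u ∪ {0} ∪ ⋃ v ∈ {v : Set Ordinal.{u} | v ⊆ u ∧ v.Countable ∧ v.Infinite}, w (idx γ w v)

open Set

section Closure

variable (γ : Ordinal.{u}) (w : Ordinal.{u} → Set Ordinal.{u})

lemma subset_cl (s : Set Ordinal.{u}) : s ⊆ cl γ w s :=
  fun _ ha => Or.inl (Or.inl ha)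

lemma w_idx_subset_cl {s v : Set Ordinal.{u}} (hvs : v ⊆ s) (hv : v.Countable)
    (hv' : v.Infinite) : w (idx γ w v) ⊆ cl γ w s :=
  fun _ ha => Or.inr (mem_biUnion ⟨hvs, hv, hv'⟩ ha)

variable {γ w}

lemma idx_spec {v : Set Ordinal.{u}} (h : ∃ i < γ, (v \ w i).Finite) :
    idx γ w v < γ ∧ (v \ w (idx γ w v)).Finite :=
  csInf_mem h

lemma idx_le_idx_of_subset {v v' : Set Ordinal.{u}} (hv' : v' ⊆ v)
    (h : ∃ i < γ, (v \ w i).Finite) : idx γ w v' ≤ idx γ w v :=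
  csInf_le_csInf (OrderBot.bddBelow _) h
    fun _ ⟨hi, hfin⟩ => ⟨hi, hfin.subset (sdiff_subset_sdiff_left hv')⟩

lemma exists_mem_w_idx_tail {x : ℕ → Ordinal.{u}} (hx : Function.Injective x)
    (htail : ∀ n, ∃ i < γ, (x '' Ici n \ w i).Finite) :
    ∃ k, x k ∈ w (idx γ w (x '' Ici (k + 1))) := by
  set N := Function.argmin fun n => idx γ w (x '' Ici n)
  have hmin (n : ℕ) : idx γ w (x '' Ici N) ≤ idx γ w (x '' Ici n) :=
    Function.argmin_le (fun n => idx γ w (x '' Ici n)) n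
  obtain ⟨_, ⟨k, hk, rfl⟩, hkw⟩ :=
    (((Ici_infinite N).image hx.injOn).sdiff (idx_spec (htail N)).2).nonempty
  refine ⟨k, ?_⟩
  have hstable : idx γ w (x '' Ici (k + 1)) = idx γ w (x '' Ici N) :=
    le_antisymm
      (idx_le_idx_of_subset (image_mono (Ici_subset_Ici.2 (Nat.le_succ_of_le hk))) (htail N))
      (hmin (k + 1))
  rw [hstable]
  by_contra hk'
  exact hkw ⟨⟨k, hk, rfl⟩, hk'⟩

end Closure

lemma injective_of_mem_of_notMem_succ {α : Type*} {u : ℕ → Set α} {x : ℕ → α}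
    (hu : Antitone u) (hxu : ∀ n, x n ∈ u n) (hxu' : ∀ n, x n ∉ u (n + 1)) :
    Function.Injective x := by
  have hne {m n : ℕ} (hmn : m < n) : x m ≠ x n :=
    fun h => hxu' m (h ▸ hu hmn (hxu n))
  intro m n h
  rcases lt_trichotomy m n with hmn | rfl | hnm
  · exact absurd h (hne hmn)
  · rfl
  · exact absurd h.symm (hne hnm)

theorem stmt_2_general (lam γ : Ordinal.{u}) (w : Ordinal.{u} → Set Ordinal.{u})
    (hcof : ∀ v : Set Ordinal.{u}, v ⊆ Set.Iio lam → v.Countable → v.Infinite →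
      ∃ i < γ, v ⊆ w i) :
    ¬ ∃ u : ℕ → Set Ordinal.{u},
      (∀ n, u n ⊆ Set.Iio lam) ∧
      (∀ n, u (n + 1) ⊆ u n) ∧
      (∀ n, ¬ u n ⊆ cl γ w (u (n + 1))) := by
  rintro ⟨u, hlam, hdec, hncl⟩
  choose x hxu hxcl using fun n => not_subset.1 (hncl n)
  have hanti : Antitone u := antitone_nat_of_succ_le hdec
  have hx : Function.Injective x :=
    injective_of_mem_of_notMem_succ hanti hxu fun n h => hxcl n (subset_cl γ w _ h)
  have htail_sub (n : ℕ) : x '' Ici n ⊆ u n := by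
    rintro _ ⟨k, hk, rfl⟩
    exact hanti hk (hxu k)
  have htail_countable (n : ℕ) : (x '' Ici n).Countable := (to_countable _).image x
  have htail_infinite (n : ℕ) : (x '' Ici n).Infinite := (Ici_infinite n).image hx.injOn
  obtain ⟨k, hk⟩ := exists_mem_w_idx_tail hx fun n => by
    obtain ⟨i, hi, hsub⟩ :=
      hcof _ ((htail_sub n).trans (hlam n)) (htail_countable n) (htail_infinite n)
    exact ⟨i, hi, by rw [sdiff_eq_empty.2 hsub]; exact finite_empty⟩
  exact hxcl k (w_idx_subset_cl γ w (htail_sub (k + 1)) (htail_countable _)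
    (htail_infinite _) hk)

/-- If `⟨w i : i < γ⟩` is a family of countable subsets of `λ` such that every countably
infinite subset of `λ` is contained in some `w i`, then there is no decreasing sequence
`⟨u n : n < ω⟩` of subsets of `λ` with `u n ⊄ cl (u (n+1))` for all `n`. -/
theorem stmt_2 (lam γ : Ordinal.{u}) (w : Ordinal.{u} → Set Ordinal.{u})
    (hw : ∀ i < γ, w i ⊆ Set.Iio lam ∧ (w i).Countable)
    (hcof : ∀ v : Set Ordinal.{u}, v ⊆ Set.Iio lam → v.Countable → v.Infinite →
      ∃ i < γ, v ⊆ w i) :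
    ¬ ∃ u : ℕ → Set Ordinal.{u},
      (∀ n, u n ⊆ Set.Iio lam) ∧
      (∀ n, u (n + 1) ⊆ u n) ∧
      (∀ n, ¬ u n ⊆ cl γ w (u (n + 1))) :=
  stmt_2_general lam γ w hcof
end

section
/- Let D be a σ-complete (ℵ1-complete) filter on a set Y, let ⟨f_α : α < δ⟩ be a sequence of functions Y → Ord, and let f : Y → Ord be a ≤_D-upper bound of the sequence such that no g : Y → Ord with g <_D f is also a ≤_D-upper bound. Define J[f, f̄, D] = { A ⊆ Y : A is D-null, or A is D-positive and there exists g : Y → Ord which is a ≤_{D+A}-upper bound of the sequence with g <_{D+A} f }. Then J[f, f̄, D] is a σ-complete ideal on Y disjoint from D. -/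
/-!
Write `P(L)` for "some upper bound of `f̄` modulo the filter `L` lies strictly below `fub`
modulo `L`". Since `D + A` is the trivial filter exactly when `A` is `D`-null, and `P` holds
trivially for the trivial filter, `A ∈ J` is just `P(D + A)`. Now `P` is antitone in the
filter, giving downward closure; `P(D)` fails, so no member of `D` lies in `J`; and for a
countable union one glues witnesses `gₙ` for the pieces `Aₙ`, following on each point the
witness of some piece containing it, which `D` tolerates because it is σ-complete.
-/

universe u

open Filter

/-- The ideal `J[f, f̄, D]` : sets `A ⊆ Y` that are `D`-null, or `D`-positive such that
the sequence `f̄` has a `≤_{D+A}`-upper bound `g` with `g <_{D+A} fub`. -/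
def Jideal (Y : Type u) (D : Filter Y) (δ : Ordinal.{u})
    (f : Ordinal.{u} → Y → Ordinal.{u}) (fub : Y → Ordinal.{u}) : Set (Set Y) :=
  {A | Aᶜ ∈ D ∨ (Aᶜ ∉ D ∧ ∃ g : Y → Ordinal.{u},
    (∀ α < δ, {s | f α s ≤ g s} ∈ D ⊓ 𝓟 A) ∧ {s | g s < fub s} ∈ D ⊓ 𝓟 A)}

variable {Y : Type u}

lemma mem_inf_principal_iUnion_of_forall {ι : Type*} [Countable ι] [Nonempty ι]
    {D : Filter Y} [CountableInterFilter D] {A : ι → Set Y} {p : ι → Y → Prop}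
    (h : ∀ i, {s | p i s} ∈ D ⊓ 𝓟 (A i)) :
    {s | p (Classical.epsilon fun i => s ∈ A i) s} ∈ D ⊓ 𝓟 (⋃ i, A i) := by
  rw [mem_inf_principal]
  have hall : ∀ᶠ s in D, ∀ i, s ∈ A i → p i s :=
    eventually_countable_forall.2 fun i => mem_inf_principal.1 (h i)
  filter_upwards [hall] with s hs hsA
  exact hs _ (Classical.epsilon_spec (Set.mem_iUnion.1 hsA))

def ExistsUpperBoundBelow (L : Filter Y) (δ : Ordinal.{u})
    (f : Ordinal.{u} → Y → Ordinal.{u}) (fub : Y → Ordinal.{u}) : Prop :=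
  ∃ g : Y → Ordinal.{u}, (∀ α < δ, {s | f α s ≤ g s} ∈ L) ∧ {s | g s < fub s} ∈ L

namespace ExistsUpperBoundBelow

variable {δ : Ordinal.{u}} {f : Ordinal.{u} → Y → Ordinal.{u}} {fub : Y → Ordinal.{u}}

lemma bot : ExistsUpperBoundBelow ⊥ δ f fub :=
  ⟨fub, fun _ _ => mem_bot, mem_bot⟩

lemma mono {L₁ L₂ : Filter Y} (hL : L₁ ≤ L₂) (h : ExistsUpperBoundBelow L₂ δ f fub) :
    ExistsUpperBoundBelow L₁ δ f fub :=
  let ⟨g, hle, hlt⟩ := h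
  ⟨g, fun α hα => hL (hle α hα), hL hlt⟩

lemma iUnion {ι : Type*} [Countable ι] [Nonempty ι] {D : Filter Y} [CountableInterFilter D]
    {A : ι → Set Y} (h : ∀ i, ExistsUpperBoundBelow (D ⊓ 𝓟 (A i)) δ f fub) :
    ExistsUpperBoundBelow (D ⊓ 𝓟 (⋃ i, A i)) δ f fub := by
  choose g hle hlt using h
  refine ⟨fun s => g (Classical.epsilon fun i => s ∈ A i) s, fun α hα => ?_, ?_⟩
  · exact mem_inf_principal_iUnion_of_forall (p := fun i s => f α s ≤ g i s)
      fun i => hle i α hα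
  · exact mem_inf_principal_iUnion_of_forall (p := fun i s => g i s < fub s) hlt

end ExistsUpperBoundBelow

lemma mem_Jideal_iff {D : Filter Y} {δ : Ordinal.{u}} {f : Ordinal.{u} → Y → Ordinal.{u}}
    {fub : Y → Ordinal.{u}} {A : Set Y} :
    A ∈ Jideal Y D δ f fub ↔ ExistsUpperBoundBelow (D ⊓ 𝓟 A) δ f fub := by
  constructor
  · rintro (hnull | ⟨-, h⟩)
    · rw [← inf_principal_eq_bot] at hnull
      exact hnull ▸ ExistsUpperBoundBelow.bot
    · exact h
  · intro h
    by_cases hnull : Aᶜ ∈ D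
    · exact Or.inl hnull
    · exact Or.inr ⟨hnull, h⟩

theorem stmt_6_general (Y : Type u) (D : Filter Y) [CountableInterFilter D]
    (δ : Ordinal.{u}) (f : Ordinal.{u} → Y → Ordinal.{u}) (fub : Y → Ordinal.{u})
    (hmin : ¬ ∃ g : Y → Ordinal.{u},
      (∀ α < δ, {s | f α s ≤ g s} ∈ D) ∧ {s | g s < fub s} ∈ D) :
    (∀ A ∈ Jideal Y D δ f fub, ∀ B ⊆ A, B ∈ Jideal Y D δ f fub) ∧
    (∀ A : ℕ → Set Y, (∀ n, A n ∈ Jideal Y D δ f fub) →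
      (⋃ n, A n) ∈ Jideal Y D δ f fub) ∧
    (∀ A ∈ Jideal Y D δ f fub, A ∉ D) := by
  simp only [mem_Jideal_iff]
  refine ⟨fun A hA B hBA => ?_, fun A hA => ExistsUpperBoundBelow.iUnion hA, fun A hA hAD => ?_⟩
  · exact hA.mono (inf_le_inf_left D (principal_mono.2 hBA))
  · rw [inf_of_le_left (le_principal_iff.2 hAD)] at hA
    exact hmin hA

/-- If `D` is a proper σ-complete filter on `Y`, `⟨f α : α < δ⟩` a sequence of ordinal
valued functions, and `fub` a `≤_D`-upper bound such that no upper bound is strictly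
`<_D`-below it, then `J[fub, f̄, D]` is a σ-complete ideal on `Y` disjoint from `D`. -/
theorem stmt_6 (Y : Type u) (D : Filter Y) [CountableInterFilter D] [D.NeBot]
    (δ : Ordinal.{u}) (f : Ordinal.{u} → Y → Ordinal.{u}) (fub : Y → Ordinal.{u})
    (hub : ∀ α < δ, {s | f α s ≤ fub s} ∈ D)
    (hmin : ¬ ∃ g : Y → Ordinal.{u},
      (∀ α < δ, {s | f α s ≤ g s} ∈ D) ∧ {s | g s < fub s} ∈ D) :
    (∀ A ∈ Jideal Y D δ f fub, ∀ B ⊆ A, B ∈ Jideal Y D δ f fub) ∧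
    (∀ A : ℕ → Set Y, (∀ n, A n ∈ Jideal Y D δ f fub) →
      (⋃ n, A n) ∈ Jideal Y D δ f fub) ∧
    (∀ A ∈ Jideal Y D δ f fub, A ∉ D) :=
  stmt_6_general Y D δ f fub hmin
end

section
/- Let ⟨δ_s : s ∈ Y⟩ be a family of limit ordinals, θ an infinite cardinal, and D a filter on Y whose dual ideal contains cf-id_{<θ}(δ̄). Suppose ⟨f_α : α < α*⟩ is a <_D-increasing sequence of members of Π_{s∈Y} δ_s that has no <_D-upper bound in Π_{s∈Y} δ_s. Then cf(α*) ≥ θ. -/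
/-!
Suppose `cf α* < θ` and fix a cofinal family `⟨α_i : i ∈ ι⟩` in `α*` with `|ι| = cf α*`.
The coordinates `s` where `{f α_i s : i ∈ ι}` is cofinal in `δ s` form a set of `cf-id_{<θ}(δ̄)`,
so off a `D`-null set all the `f α_i s` lie below some `g s < δ s`. Since every `α < α*` is
`≤ α_i` for some `i`, this `g` is a `<_D`-upper bound of the whole sequence. No case split on
`α*` is needed: for a successor `α*` the last element is among the `α_i`.
-/

universe u

open Cardinal

noncomputable def otp (s : Set Ordinal.{u}) : Ordinal.{u + 1} :=
  Ordinal.type (α := ↥s) (· < ·)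

/-- `cfId Y δ θ` is the ideal `cf-id_{<θ}(δ̄)`. -/
def cfId (Y : Type u) (δ : Y → Ordinal.{u}) (θ : Cardinal.{u}) : Set (Set Y) :=
  {X | ∃ u : Y → Set Ordinal.{u}, ∀ s ∈ X,
    u s ⊆ Set.Iio (δ s) ∧ (∀ β < δ s, ∃ γ ∈ u s, β ≤ γ) ∧
      otp (u s) < Ordinal.lift.{u + 1} θ.ord}

theorem Ordinal.exists_cofinal_family_mk_eq_cof (o : Ordinal.{u}) :
    ∃ (ι : Type u) (F : ι → Ordinal.{u}), #ι = o.cof ∧ (∀ i, F i < o) ∧ ∀ α < o, ∃ i, α ≤ F i := by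
  obtain ⟨C, hC, hCmk⟩ := Order.exists_cof_eq o.ToType
  refine ⟨C, fun c => ToType.toOrd c.1, by rw [hCmk, cof_toType], fun c => (ToType.toOrd c.1).2,
    fun α hα => ?_⟩
  obtain ⟨c, hc, hle⟩ := hC (ToType.mk ⟨α, hα⟩)
  have hαc := ToType.mk.symm.monotone hle
  rw [OrderIso.symm_apply_apply] at hαc
  exact ⟨⟨c, hc⟩, hαc⟩

theorem otp_lt_lift_ord_of_mk_lt {s : Set Ordinal.{u}} {θ : Cardinal.{u}}
    (hs : #s < Cardinal.lift.{u + 1} θ) :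
    otp s < Ordinal.lift.{u + 1} θ.ord := by
  rwa [Cardinal.lift_ord, Cardinal.lt_ord, otp, Ordinal.card_type]

theorem mem_cfId_of_mk_lt {Y ι : Type u} {δ : Y → Ordinal.{u}} {θ : Cardinal.{u}} (hι : #ι < θ)
    (h : ι → Y → Ordinal.{u}) (hδ : ∀ i s, h i s < δ s) :
    {s | ∀ β < δ s, ∃ i, β ≤ h i s} ∈ cfId Y δ θ := by
  refine ⟨fun s => Set.range (h · s), fun s hs => ⟨?_, ?_, ?_⟩⟩
  · rintro _ ⟨i, rfl⟩
    exact hδ i s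
  · simpa using hs
  · have hrange := Cardinal.mk_range_le_lift (f := (h · s))
    rw [Cardinal.lift_id'.{u, u + 1}] at hrange
    exact otp_lt_lift_ord_of_mk_lt (hrange.trans_lt (Cardinal.lift_lt.mpr hι))

theorem exists_bound_of_compl_cofinal_mem {Y ι : Type u} {δ : Y → Ordinal.{u}} {D : Filter Y}
    (hδ : ∀ s, 0 < δ s) (h : ι → Y → Ordinal.{u})
    (hD : {s | ∀ β < δ s, ∃ i, β ≤ h i s}ᶜ ∈ D) :
    ∃ g : Y → Ordinal.{u}, (∀ s, g s < δ s) ∧ ∀ᶠ s in D, ∀ i, h i s < g s := by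
  have hbound : ∀ s, ∃ β < δ s, (¬ ∀ β < δ s, ∃ i, β ≤ h i s) → ∀ i, h i s < β := by
    intro s
    by_cases hs : ∀ β < δ s, ∃ i, β ≤ h i s
    · exact ⟨0, hδ s, fun hs' => (hs' hs).elim⟩
    · push Not at hs
      obtain ⟨β, hβ, hlt⟩ := hs
      exact ⟨β, hβ, fun _ => hlt⟩
  choose g hgδ hg using hbound
  exact ⟨g, hgδ, Filter.mem_of_superset hD fun s hs => hg s hs⟩

theorem stmt_9_general (Y : Type u) (δ : Y → Ordinal.{u}) (hδ : ∀ s, Order.IsSuccLimit (δ s))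
    (θ : Cardinal.{u}) (D : Filter Y)
    (hD : ∀ X ∈ cfId Y δ θ, Xᶜ ∈ D)
    (αstar : Ordinal.{u}) (f : Ordinal.{u} → Y → Ordinal.{u})
    (hmem : ∀ α < αstar, ∀ s, f α s < δ s)
    (hinc : ∀ α β : Ordinal.{u}, α < β → β < αstar → {s | f α s < f β s} ∈ D)
    (hnub : ¬ ∃ g : Y → Ordinal.{u}, (∀ s, g s < δ s) ∧
      ∀ α < αstar, {s | f α s < g s} ∈ D) :
    θ ≤ Ordinal.cof αstar := by
  by_contra! hcof
  obtain ⟨ι, F, hι, hF, hcofinal⟩ := Ordinal.exists_cofinal_family_mk_eq_cof αstar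
  obtain ⟨g, hgδ, hg⟩ := exists_bound_of_compl_cofinal_mem (fun s => (hδ s).pos) (fun i => f (F i))
    (hD _ (mem_cfId_of_mk_lt (hι ▸ hcof) _ fun i => hmem (F i) (hF i)))
  refine hnub ⟨g, hgδ, fun α hα => ?_⟩
  obtain ⟨i, hαi⟩ := hcofinal α hα
  have hle : ∀ᶠ s in D, f α s ≤ f (F i) s := by
    rcases hαi.eq_or_lt with rfl | hlt
    · exact .of_forall fun _ => le_rfl
    · exact Filter.Eventually.mono (hinc α (F i) hlt (hF i)) fun _ => le_of_lt
  filter_upwards [hg, hle] with s hgs hles using hles.trans_lt (hgs i)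

/-- If the dual ideal of `D` contains `cf-id_{<θ}(δ̄)` and `⟨f α : α < α*⟩` is a
`<_D`-increasing sequence in `Π δ̄` with no `<_D`-upper bound in `Π δ̄`, then
`cf(α*) ≥ θ`. -/
theorem stmt_9 (Y : Type u) (δ : Y → Ordinal.{u}) (hδ : ∀ s, Order.IsSuccLimit (δ s))
    (θ : Cardinal.{u}) (hθ : ℵ₀ ≤ θ) (D : Filter Y)
    (hD : ∀ X ∈ cfId Y δ θ, Xᶜ ∈ D)
    (αstar : Ordinal.{u}) (f : Ordinal.{u} → Y → Ordinal.{u})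
    (hmem : ∀ α < αstar, ∀ s, f α s < δ s)
    (hinc : ∀ α β : Ordinal.{u}, α < β → β < αstar → {s | f α s < f β s} ∈ D)
    (hnub : ¬ ∃ g : Y → Ordinal.{u}, (∀ s, g s < δ s) ∧
      ∀ α < αstar, {s | f α s < g s} ∈ D) :
    θ ≤ Ordinal.cof αstar :=
  stmt_9_general Y δ hδ θ D hD αstar f hmem hinc hnub
end

section
/- (ZF) Fix a nonempty set Y and a natural number k ≥ 1. Define by recursion X_0 = Y and, for 0 < m < k, X_m = the set of all functions from Π_{ℓ<m} (^ω X_ℓ) to Y. Let Λ = Π_{m<k} (^ω X_m), and for m < k, n < ω and η̄ = ⟨η_ℓ : ℓ<k⟩ ∈ Λ let η̄↾(m,n) be the tuple obtained by replacing η_m with its restriction η_m↾n. Let Ω = { η̄↾(m,n) : η̄ ∈ Λ, m < k, n < ω }. Then there exist (explicitly definable, without choice) functions h_{m,n} : Λ → Y for m < k, n < ω such that: for every function g : Ω → Y there exists η̄ ∈ Λ with h_{m,n}(η̄) = g(η̄↾(m,n)) for all m < k and n < ω. -/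
/-!
Build `η̄` by recursion downward on `m` and upward on `n`: `η_m(n)` is the function sending an
initial tuple `t ∈ Π_{ℓ<m} (^ω X_ℓ)` to `g (ζ ↾ (m,n))`, where `ζ` agrees with `t` below `m`, with
the already constructed `η_ℓ` above `m`, and with `η_m` below `n`. Since `h_{m,n}` evaluates
`η_m(n)` at `t = η̄ ↾ m`, the tuple `ζ ↾ (m,n)` is then exactly `η̄ ↾ (m,n)`.
-/

universe u

/-- `BBP Y m` is the product `Π_{ℓ<m} (^ω X_ℓ)` where `X_0 = Y` and
`X_{ℓ+1} = (Π_{j<ℓ+1} (^ω X_j)) → Y`, coded as nested pairs. -/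
def BBP (Y : Type u) : ℕ → Type u
  | 0 => PUnit
  | 1 => PUnit × (ℕ → Y)
  | (m + 2) => BBP Y (m + 1) × (ℕ → (BBP Y (m + 1) → Y))

/-- `BBX Y m` is the set `X_m` : `X_0 = Y` and for `m > 0`,
`X_m` is the set of functions from `Π_{ℓ<m} (^ω X_ℓ)` to `Y`. -/
def BBX (Y : Type u) : ℕ → Type u
  | 0 => Y
  | (m + 1) => BBP Y (m + 1) → Y

namespace BBP

variable (Y : Type u)

def succEquiv : (m : ℕ) → BBP Y (m + 1) ≃ BBP Y m × (ℕ → BBX Y m)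
  | 0 => Equiv.refl _
  | _ + 1 => Equiv.refl _

def equivPi : (m : ℕ) → BBP Y m ≃ ((ℓ : Fin m) → ℕ → BBX Y ℓ)
  | 0 => Equiv.ofUnique PUnit _
  | m + 1 => (succEquiv Y m).trans <|
      ((equivPi m).prodCongr (Equiv.refl _)).trans <|
        (Equiv.prodComm _ _).trans (Fin.snocEquiv fun ℓ : Fin (m + 1) => ℕ → BBX Y ℓ)

end BBP

namespace BBX

variable {Y : Type u}

/-- Every `X_m` is read as functions on `Π_{ℓ<m} (^ω X_ℓ)`, `X_0 = Y` as those on the empty tuple. -/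
def eval : {m : ℕ} → BBX Y m → ((ℓ : Fin m) → ℕ → BBX Y ℓ) → Y
  | 0, y, _ => y
  | m + 1, f, t => f ((BBP.equivPi Y (m + 1)).symm t)

def ofFun : {m : ℕ} → (((ℓ : Fin m) → ℕ → BBX Y ℓ) → Y) → BBX Y m
  | 0, f => f finZeroElim
  | m + 1, f => fun p => f (BBP.equivPi Y (m + 1) p)

@[simp]
theorem eval_ofFun {m : ℕ} (f : ((ℓ : Fin m) → ℕ → BBX Y ℓ) → Y)
    (t : (ℓ : Fin m) → ℕ → BBX Y ℓ) :
    (ofFun f).eval t = f t := by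
  cases m with
  | zero => exact congrArg f (Subsingleton.elim _ _)
  | succ m => exact congrArg f (Equiv.apply_symm_apply _ t)

end BBX

section BlackBox

variable {Y : Type u} {k : ℕ}

abbrev BBLam (Y : Type u) (k : ℕ) := ∀ m : Fin k, ℕ → BBX Y m

def blackBox (m : Fin k) (n : ℕ) (η : BBLam Y k) : Y :=
  (η m n).eval fun ℓ => η (Fin.castLE m.isLt.le ℓ)

def splice {m : ℕ} (t : (ℓ : Fin m) → ℕ → BBX Y ℓ) (η : BBLam Y k) : BBLam Y k :=
  fun ℓ => if h : ℓ.val < m then t ⟨ℓ, h⟩ else η ℓ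

/-- The entries `(m, j)` with `j ≥ n` receive an arbitrary filler, which `g _ m n` cannot see. -/
noncomputable def blackBoxWitness [Nonempty Y] (g : BBLam Y k → Fin k → ℕ → Y) (m : Fin k)
    (n : ℕ) : BBX Y m :=
  BBX.ofFun fun t => g (splice t fun ℓ j =>
    if _ : m < ℓ ∨ ℓ = m ∧ j < n then blackBoxWitness g ℓ j
    else BBX.ofFun fun _ => Classical.arbitrary Y) m n
termination_by (k - m.val, n)
decreasing_by
  obtain h | ⟨rfl, h⟩ := ‹m < _ ∨ _›
  · exact Prod.Lex.left _ _ (by omega)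
  · exact Prod.Lex.right _ h

theorem splice_of_lt {m : ℕ} (t : (ℓ : Fin m) → ℕ → BBX Y ℓ) (η : BBLam Y k) {ℓ : Fin k}
    (h : ℓ.val < m) : splice t η ℓ = t ⟨ℓ, h⟩ :=
  dif_pos h

theorem splice_of_le {m : ℕ} (t : (ℓ : Fin m) → ℕ → BBX Y ℓ) (η : BBLam Y k) {ℓ : Fin k}
    (h : m ≤ ℓ.val) : splice t η ℓ = η ℓ :=
  dif_neg h.not_gt

def DependsOnRestriction (g : BBLam Y k → Fin k → ℕ → Y) : Prop :=
  ∀ η ν : BBLam Y k, ∀ m : Fin k, ∀ n : ℕ,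
    (∀ ℓ : Fin k, ℓ ≠ m → η ℓ = ν ℓ) → (∀ j < n, η m j = ν m j) → g η m n = g ν m n

theorem blackBox_blackBoxWitness [Nonempty Y] {g : BBLam Y k → Fin k → ℕ → Y}
    (hg : DependsOnRestriction g) (m : Fin k) (n : ℕ) :
    blackBox m n (blackBoxWitness g) = g (blackBoxWitness g) m n := by
  rw [blackBox, blackBoxWitness, BBX.eval_ofFun]
  apply hg
  · intro ℓ hne
    rcases lt_or_gt_of_ne (Fin.val_ne_of_ne hne) with hlt | hgt
    · exact splice_of_lt _ _ hlt
    · rw [splice_of_le _ _ hgt.le]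
      funext j
      exact dif_pos (Or.inl hgt)
  · intro j hj
    rw [splice_of_le _ _ le_rfl]
    exact dif_pos (Or.inr ⟨rfl, hj⟩)

end BlackBox

theorem stmt_13_general (Y : Type u) [Nonempty Y] (k : ℕ) :
    ∃ h : Fin k → ℕ → (∀ m : Fin k, ℕ → BBX Y m.val) → Y,
      ∀ g : (∀ m : Fin k, ℕ → BBX Y m.val) → Fin k → ℕ → Y,
        (∀ η ν : (∀ m : Fin k, ℕ → BBX Y m.val), ∀ m : Fin k, ∀ n : ℕ,
          (∀ ℓ : Fin k, ℓ ≠ m → η ℓ = ν ℓ) → (∀ j < n, η m j = ν m j) →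
            g η m n = g ν m n) →
        ∃ η : (∀ m : Fin k, ℕ → BBX Y m.val), ∀ (m : Fin k) (n : ℕ),
          h m n η = g η m n :=
  ⟨blackBox, fun _ hg => ⟨blackBoxWitness _, blackBox_blackBoxWitness hg⟩⟩

/-- (ZF) The black box: with `X_m` as above and `Λ = Π_{m<k} (^ω X_m)`, there are
functions `h m n : Λ → Y` such that for every `g` assigning to each restricted tuple
`η̄ ↾ (m,n)` a member of `Y` (coded as a function on `Λ × k × ω` depending only on the
restriction `η̄ ↾ (m,n)`), some `η̄ ∈ Λ` satisfies `h m n η̄ = g (η̄ ↾ (m,n))` for all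
`m < k`, `n < ω`. -/
theorem stmt_13 (Y : Type u) [Nonempty Y] (k : ℕ) (hk : 1 ≤ k) :
    ∃ h : Fin k → ℕ → (∀ m : Fin k, ℕ → BBX Y m.val) → Y,
      ∀ g : (∀ m : Fin k, ℕ → BBX Y m.val) → Fin k → ℕ → Y,
        (∀ η ν : (∀ m : Fin k, ℕ → BBX Y m.val), ∀ m : Fin k, ∀ n : ℕ,
          (∀ ℓ : Fin k, ℓ ≠ m → η ℓ = ν ℓ) → (∀ j < n, η m j = ν m j) →
            g η m n = g ν m n) →
        ∃ η : (∀ m : Fin k, ℕ → BBX Y m.val), ∀ (m : Fin k) (n : ℕ),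
          h m n η = g η m n :=
  stmt_13_general Y k
end

section
/- For every nonzero integer a and every sequence ⟨a_n : n < ω⟩ of integers, there exists a sequence ⟨b_n : n < ω⟩ of integers such that there is NO sequence ⟨t_n : n < ω⟩ of integers satisfying n!·t_{n+1} = t_n − a_{n+1} − b_n·a for every n < ω. -/
/-!
If `t` solves `n! t_{n+1} = t_n - a_{n+1} - b_n a`, unrolling the recursion gives
`t_0 ≡ S_n (mod P_n)` for every `n`, where `P_n = ∏_{k<n} k!` and
`S_n = ∑_{k<n} P_k (a_{k+1} + b_k a)`. Changing `b_n` by one moves `S_{n+1}` by `P_n a`, which is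
not divisible by `P_{n+1} = P_n n!` once `n > |a|`. So `b_n ∈ {0, 1}` can be chosen so that
`S_{n+1}` misses the residue of the `n`-th integer of an enumeration of `ℤ`, and then no integer
can be `t_0`.
-/

open Finset Nat

section Diagonal

variable {R : Type*} [CommRing R]

open Classical in
private noncomputable def avoidingSum (M x y c : ℕ → R) : ℕ → R
  | 0 => 0
  | n + 1 =>
      let s := avoidingSum M x y c n + x n
      if M n ∣ c n - s then s + y n else s

open Classical in
private noncomputable def avoidingCoeff (M x y c : ℕ → R) (n : ℕ) : R :=
  if M n ∣ c n - (avoidingSum M x y c n + x n) then 1 else 0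

private lemma avoidingSum_eq_sum (M x y c : ℕ → R) (n : ℕ) :
    avoidingSum M x y c n = ∑ k ∈ range n, (x k + avoidingCoeff M x y c k * y k) := by
  induction n with
  | zero => rfl
  | succ n ih =>
    rw [sum_range_succ, ← ih, avoidingSum, avoidingCoeff]
    split_ifs <;> ring

/-- The `b n ∈ {0, 1}` are chosen greedily: the two candidate partial sums differ by `y n`, so
they cannot both be `≡ c n` modulo `M n`. -/
theorem exists_forall_not_dvd_sub_sum (M x y c : ℕ → R) :
    ∃ b : ℕ → R, ∀ n, ¬ M n ∣ y n → ¬ M n ∣ c n - ∑ k ∈ range (n + 1), (x k + b k * y k) := by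
  refine ⟨avoidingCoeff M x y c, fun n hy hdvd => ?_⟩
  rw [← avoidingSum_eq_sum, avoidingSum] at hdvd
  split_ifs at hdvd with hprev
  · exact hy (by simpa using (dvd_sub hprev hdvd))
  · exact hprev hdvd

end Diagonal

theorem eq_prod_mul_add_sum_of_mul_succ_eq {R : Type*} [CommRing R] {u t r : ℕ → R}
    (h : ∀ n, u n * t (n + 1) = t n - r n) (n : ℕ) :
    t 0 = (∏ k ∈ range n, u k) * t n + ∑ k ∈ range n, (∏ j ∈ range k, u j) * r k := by
  induction n with
  | zero => simp
  | succ n ih =>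
    rw [prod_range_succ, sum_range_succ, ih]
    linear_combination (-∏ k ∈ range n, u k) * h n

theorem Int.not_factorial_dvd_of_natAbs_lt {a : ℤ} (ha : a ≠ 0) {n : ℕ} (hn : a.natAbs < n) :
    ¬ (n ! : ℤ) ∣ a := by
  rw [Int.natCast_dvd]
  intro hdvd
  have := Nat.le_of_dvd (Int.natAbs_pos.mpr ha) hdvd
  have := Nat.self_le_factorial n
  omega

/-- For every nonzero integer `a` and every sequence `⟨a n : n < ω⟩` of integers there
is a sequence `⟨b n : n < ω⟩` of integers such that no sequence `⟨t n : n < ω⟩` of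
integers satisfies `n! * t (n+1) = t n − a (n+1) − b n * a` for every `n`. -/
theorem stmt_15 (a : ℤ) (ha : a ≠ 0) (aseq : ℕ → ℤ) :
    ∃ b : ℕ → ℤ, ¬ ∃ t : ℕ → ℤ,
      ∀ n : ℕ, (n.factorial : ℤ) * t (n + 1) = t n - aseq (n + 1) - b n * a := by
  set P : ℕ → ℤ := fun n => ∏ k ∈ range n, (k ! : ℤ)
  set N := a.natAbs + 1
  obtain ⟨b, hb⟩ := exists_forall_not_dvd_sub_sum (fun n => P (n + 1))
    (fun n => P n * aseq (n + 1)) (fun n => P n * a)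
    (fun n => Equiv.intEquivNat.symm (n - N))
  refine ⟨b, fun ⟨t, ht⟩ => ?_⟩
  have ht0 := eq_prod_mul_add_sum_of_mul_succ_eq (r := fun n => aseq (n + 1) + b n * a)
    (fun n => (ht n).trans (sub_sub _ _ _))
  obtain ⟨m, hm⟩ := Equiv.intEquivNat.symm.surjective (t 0)
  refine hb (m + N) ?_ ?_
  · simp only [P, prod_range_succ]
    rw [mul_dvd_mul_iff_left (prod_ne_zero_iff.mpr fun k _ => by positivity)]
    exact Int.not_factorial_dvd_of_natAbs_lt ha (by omega)
  · have hsum : ∀ n, ∑ k ∈ range n, (P k * aseq (k + 1) + b k * (P k * a)) =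
        ∑ k ∈ range n, P k * (aseq (k + 1) + b k * a) := fun n => sum_congr rfl fun _ _ => by ring
    rw [Nat.add_sub_cancel, hm, ht0 (m + N + 1), hsum]
    exact ⟨t (m + N + 1), by simp only [P, add_sub_cancel_right]⟩
end

section
/- Let Y be a set, ⟨δ_s : s ∈ Y⟩ limit ordinals, D* a σ-complete filter on Y, and θ a cardinal such that: cf-id_{<θ}(δ̄) is contained in the dual ideal of D*, and hrtg(P(Y)) ≤ θ. Suppose further that for every D-positive set and every relevant σ-complete extension D of D*, exact upper bounds as in the eub-existence claim are available, and that (Π δ̄, <_{D*}) has a well-orderable cofinal subset F. Then there is a <_{D*}-increasing sequence ⟨f_α : α < α*⟩ in Π δ̄ with no <_{D*}-upper bound in Π δ̄, obtained by recursively taking least upper bounds from F; moreover cf(α*) ≥ θ. -/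
universe u

open Cardinal Filter

/-- `hrtg A` : the least ordinal `o` such that there is no surjection from `A` onto `o`. -/
noncomputable def hrtg (A : Type u) : Ordinal.{u} :=
  sInf {o : Ordinal.{u} | ¬ ∃ f : A → o.ToType, Function.Surjective f}

/-!
Build `f α` by transfinite recursion, taking at each stage some strict `D*`-upper bound in `Π δ̄`
of the earlier stages. By Burali-Forti the recursion cannot run through all ordinals, since an
increasing sequence would inject `Ordinal` into the small type `Π s, Iio (δ s)`; let `α*` be
the first stage with no strict upper bound. If `cf(α*) < θ`, take a cofinal family `e` of
size `< θ` and the pointwise supremum `m s = sup_i f (e i) s`. The set where `m s` reaches `δ s`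
is witnessed by the ranges `{f (e i) s}` to lie in `cf-id_{<θ}(δ̄)`, hence off `D*`, and on the
rest `m + 1` is a strict upper bound of the whole sequence, contradicting the choice of `α*`.
-/

open Order

variable {Y : Type u}

theorem otp_range_lt {ι : Type u} (g : ι → Ordinal.{u}) {θ : Cardinal.{u}} (h : #ι < θ) :
    otp (Set.range g) < Ordinal.lift.{u + 1} θ.ord := by
  rw [Cardinal.lift_ord, Cardinal.lt_ord, otp, Ordinal.card_type, ← lift_id'.{u, u + 1} #_]
  exact mk_range_le_lift.trans_lt (lift_lt.2 h)

theorem Ordinal.exists_cofinal_family (α : Ordinal.{u}) :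
    ∃ (ι : Type u) (e : ι → Ordinal.{u}),
      (∀ i, e i < α) ∧ (∀ β < α, ∃ i, β ≤ e i) ∧ #ι = α.cof := by
  obtain ⟨s, hs, hcard⟩ := Order.exists_cof_eq α.ToType
  refine ⟨s, fun x => x.1.toOrd, fun x => x.1.toOrd.2, fun β hβ => ?_, by rw [hcard, cof_toType]⟩
  obtain ⟨y, hy, hle⟩ := hs (ToType.mk ⟨β, hβ⟩)
  exact ⟨⟨y, hy⟩, ToType.mk.le_symm_apply.2 hle⟩

theorem setOf_le_iSup_mem_cfId {δ : Y → Ordinal.{u}} {θ : Cardinal.{u}} {ι : Type u}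
    (g : ι → Y → Ordinal.{u}) (hg : ∀ i s, g i s < δ s) (hι : #ι < θ) :
    {s | δ s ≤ ⨆ i, g i s} ∈ cfId Y δ θ := by
  refine ⟨fun s => Set.range fun i => g i s, fun s hs => ⟨?_, fun β hβ => ?_, otp_range_lt _ hι⟩⟩
  · rintro _ ⟨i, rfl⟩
    exact hg i s
  · obtain ⟨i, hi⟩ := Ordinal.lt_iSup_iff.1 (hβ.trans_le hs)
    exact ⟨g i s, Set.mem_range_self i, hi.le⟩

section UpperBounds

variable (D : Filter Y) (δ : Y → Ordinal.{u})

def IsStrictUpperBound (f : Ordinal.{u} → Y → Ordinal.{u}) (α : Ordinal.{u})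
    (g : Y → Ordinal.{u}) : Prop :=
  (∀ s, g s < δ s) ∧ ∀ β < α, {s | f β s < g s} ∈ D

def HasStrictUpperBound (f : Ordinal.{u} → Y → Ordinal.{u}) (α : Ordinal.{u}) : Prop :=
  ∃ g, IsStrictUpperBound D δ f α g

open Classical in
/-- The value `0` is junk, taken once the earlier stages have no strict upper bound. -/
noncomputable def boundSeq : Ordinal.{u} → Y → Ordinal.{u} :=
  Ordinal.lt_wf.fix fun α ih =>
    if h : ∃ g : Y → Ordinal.{u}, (∀ s, g s < δ s) ∧
        ∀ β (hβ : β < α), {s | ih β hβ s < g s} ∈ D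
    then h.choose else 0

open Classical in
theorem boundSeq_eq (α : Ordinal.{u}) :
    boundSeq D δ α =
      if h : HasStrictUpperBound D δ (boundSeq D δ) α then h.choose else 0 :=
  WellFounded.fix_eq _ _ _

variable {D δ}

theorem HasStrictUpperBound.isStrictUpperBound_boundSeq {α : Ordinal.{u}}
    (h : HasStrictUpperBound D δ (boundSeq D δ) α) :
    IsStrictUpperBound D δ (boundSeq D δ) α (boundSeq D δ α) := by
  rw [boundSeq_eq, dif_pos h]
  exact h.choose_spec

variable (D δ) in
theorem exists_not_hasStrictUpperBound_boundSeq [D.NeBot] :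
    ∃ α, ¬ HasStrictUpperBound D δ (boundSeq D δ) α := by
  by_contra! h
  have hb := fun α => (h α).isStrictUpperBound_boundSeq
  refine not_injective_of_ordinal
    (fun α s => (⟨boundSeq D δ α s, (hb α).1 s⟩ : Set.Iio (δ s))) ?_
  refine .of_lt_imp_ne fun α β hαβ heq => ?_
  obtain ⟨s, hs⟩ := Filter.nonempty_of_mem ((hb β).2 α hαβ)
  exact hs.ne (congrArg Subtype.val (congrFun heq s))

theorem hasStrictUpperBound_of_cof_lt (hδ : ∀ s, IsSuccLimit (δ s)) {θ : Cardinal.{u}}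
    (hθ : ∀ X ∈ cfId Y δ θ, Xᶜ ∈ D) {f : Ordinal.{u} → Y → Ordinal.{u}} {α : Ordinal.{u}}
    (hf : ∀ β < α, ∀ s, f β s < δ s)
    (hinc : ∀ β γ, β < γ → γ < α → {s | f β s < f γ s} ∈ D) (hα : α.cof < θ) :
    HasStrictUpperBound D δ f α := by
  obtain ⟨ι, e, he, hcof, hι⟩ := α.exists_cofinal_family
  set m : Y → Ordinal.{u} := fun s => ⨆ i, f (e i) s
  have hX : {s | δ s ≤ m s}ᶜ ∈ D :=
    hθ _ (setOf_le_iSup_mem_cfId _ (fun i => hf (e i) (he i)) (hι ▸ hα))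
  refine ⟨fun s => if δ s ≤ m s then 0 else m s + 1, fun s => ?_, fun β hβ => ?_⟩
  · dsimp only
    split_ifs with hs
    · exact (hδ s).pos
    · exact (hδ s).add_one_lt (not_le.1 hs)
  obtain ⟨i, hi⟩ := hcof β hβ
  have hle : {s | f β s ≤ f (e i) s} ∈ D := by
    rcases hi.eq_or_lt with rfl | hlt
    · exact univ_mem' fun s => le_refl (f (e i) s)
    · filter_upwards [hinc β (e i) hlt (he i)] with s hs using hs.le
  filter_upwards [hle, hX] with s hs (hsX : ¬ δ s ≤ m s)
  rw [if_neg hsX]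
  exact hs.trans_lt ((Ordinal.le_iSup _ i).trans_lt (lt_add_one _))

end UpperBounds

theorem stmt_19_general (Y : Type u) (δ : Y → Ordinal.{u}) (hδ : ∀ s, Order.IsSuccLimit (δ s))
    (Dstar : Filter Y) [Dstar.NeBot]
    (θ : Cardinal.{u})
    (hθid : ∀ X ∈ cfId Y δ θ, Xᶜ ∈ Dstar) :
    ∃ (αstar : Ordinal.{u}) (f : Ordinal.{u} → Y → Ordinal.{u}),
      (∀ α < αstar, ∀ s, f α s < δ s) ∧
      (∀ α β : Ordinal.{u}, α < β → β < αstar → {s | f α s < f β s} ∈ Dstar) ∧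
      (¬ ∃ g : Y → Ordinal.{u}, (∀ s, g s < δ s) ∧
        ∀ α < αstar, {s | f α s < g s} ∈ Dstar) ∧
      θ ≤ Ordinal.cof αstar := by
  obtain ⟨αstar, hstop, hmin⟩ :=
    Ordinal.lt_wf.has_min _ (exists_not_hasStrictUpperBound_boundSeq Dstar δ)
  have hbelow (β) (hβ : β < αstar) :
      IsStrictUpperBound Dstar δ (boundSeq Dstar δ) β (boundSeq Dstar δ β) :=
    (not_not.1 fun h => hmin β h hβ).isStrictUpperBound_boundSeq
  have hf : ∀ β < αstar, ∀ s, boundSeq Dstar δ β s < δ s := fun β hβ => (hbelow β hβ).1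
  have hinc (β γ : Ordinal.{u}) (hβγ : β < γ) (hγ : γ < αstar) :
      {s | boundSeq Dstar δ β s < boundSeq Dstar δ γ s} ∈ Dstar :=
    (hbelow γ hγ).2 β hβγ
  refine ⟨αstar, boundSeq Dstar δ, hf, hinc, hstop, ?_⟩
  by_contra! hcof
  exact hstop (hasStrictUpperBound_of_cof_lt hδ hθid hf hinc hcof)

/-- Under the hypotheses: `D*` is a proper σ-complete filter whose dual ideal contains
`cf-id_{<θ}(δ̄)`, `hrtg (P Y) ≤ θ`, minimal upper bounds exist for bounded increasing
sequences mod any σ-complete extension of `D*`, and `(Π δ̄, <_{D*})` has a well-orderable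
cofinal subset `F` — there is a `<_{D*}`-increasing sequence `⟨f α : α < α*⟩` in `Π δ̄`
with no `<_{D*}`-upper bound in `Π δ̄`, and `cf(α*) ≥ θ`. -/
theorem stmt_19 (Y : Type u) (δ : Y → Ordinal.{u}) (hδ : ∀ s, Order.IsSuccLimit (δ s))
    (Dstar : Filter Y) [CountableInterFilter Dstar] [Dstar.NeBot]
    (θ : Cardinal.{u}) (hθ : ℵ₀ ≤ θ)
    (hθid : ∀ X ∈ cfId Y δ θ, Xᶜ ∈ Dstar)
    (hhrtg : hrtg (Set Y) ≤ θ.ord)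
    (heub : ∀ D' : Filter Y, Dstar ≤ D' → CountableInterFilter D' → D'.NeBot →
      ∀ (β : Ordinal.{u}) (g : Ordinal.{u} → Y → Ordinal.{u}),
        (∀ γ < β, ∀ s, g γ s < δ s) →
        (∀ γ γ' : Ordinal.{u}, γ ≤ γ' → γ' < β → {s | g γ s ≤ g γ' s} ∈ D') →
        (∃ b : Y → Ordinal.{u}, (∀ s, b s < δ s) ∧ ∀ γ < β, {s | g γ s ≤ b s} ∈ D') →
        ∃ fb : Y → Ordinal.{u}, (∀ s, fb s < δ s) ∧
          (∀ γ < β, {s | g γ s ≤ fb s} ∈ D') ∧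
          ¬ ∃ h : Y → Ordinal.{u},
            (∀ γ < β, {s | g γ s ≤ h s} ∈ D') ∧ {s | h s < fb s} ∈ D')
    (F : Set (Y → Ordinal.{u}))
    (hF1 : ∀ h ∈ F, ∀ s, h s < δ s)
    (hF2 : ∀ g : Y → Ordinal.{u}, (∀ s, g s < δ s) →
      ∃ h ∈ F, {s | g s ≤ h s} ∈ Dstar)
    (hFwo : ∃ r : ↥F → ↥F → Prop, IsWellOrder ↥F r) :
    ∃ (αstar : Ordinal.{u}) (f : Ordinal.{u} → Y → Ordinal.{u}),
      (∀ α < αstar, ∀ s, f α s < δ s) ∧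
      (∀ α β : Ordinal.{u}, α < β → β < αstar → {s | f α s < f β s} ∈ Dstar) ∧
      (¬ ∃ g : Y → Ordinal.{u}, (∀ s, g s < δ s) ∧
        ∀ α < αstar, {s | f α s < g s} ∈ Dstar) ∧
      θ ≤ Ordinal.cof αstar :=
  stmt_19_general Y δ hδ Dstar θ hθid
end
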